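/- arXiv:2307.06422 — 6 statements merged into one kernel-verified Lean document; each statement's English description precedes it below -/
import Mathlib

section
/- Let n, h, D be natural numbers with h ≥ 1, let r ∈ [n], let A, A' ∈ {0,1}^{n×n} be adjacency matrices with zero diagonal such that every column of A and every column of A' sums to at most D, and such that A and A' differ only in row and column r. Let H, H' ∈ ℝ^{n×h} be matrices such that every row of H and of H' has ℓ2 norm at most 1 and H_i = H'_i for every i ≠ r. Then ∑_{i∈[n], i≠r} ‖(AH)_i − (A'H')_i‖² ≤ 4D; equivalently, ‖[AH]_{∖r} − [A'H']_{∖r}‖_F ≤ 2√D. -/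
open Finset

/-- **Sensitivity bound underlying Theorem 5.1 (GAP).**
Let `A, A' ∈ {0,1}^{n×n}` be adjacency matrices (zero diagonal) with all column sums at most
`D`, differing only in row and column `r`.  Let `H, H' ∈ ℝ^{n×h}` have all rows of ℓ2 norm at
most `1` and agree on every row `i ≠ r`.  Then
`∑_{i ≠ r} ‖(AH)_i − (A'H')_i‖² ≤ 4D`, equivalently `‖[AH]_{∖r} − [A'H']_{∖r}‖_F ≤ 2√D`. -/
theorem gap_node_sensitivity
    (n h D : ℕ) (hh : 1 ≤ h) (r : Fin n)
    (A A' : Fin n → Fin n → ℝ)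
    (hA01 : ∀ i j, A i j = 0 ∨ A i j = 1)
    (hA'01 : ∀ i j, A' i j = 0 ∨ A' i j = 1)
    (hAdiag : ∀ i, A i i = 0)
    (hA'diag : ∀ i, A' i i = 0)
    (hAdeg : ∀ j, (∑ i, A i j) ≤ (D : ℝ))
    (hA'deg : ∀ j, (∑ i, A' i j) ≤ (D : ℝ))
    (hdiff : ∀ i j, i ≠ r → j ≠ r → A i j = A' i j)
    (H H' : Fin n → Fin h → ℝ)
    (hH : ∀ i, (∑ j, (H i j) ^ 2) ≤ 1)
    (hH' : ∀ i, (∑ j, (H' i j) ^ 2) ≤ 1)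
    (hHr : ∀ i, i ≠ r → H i = H' i) :
    (∑ i ∈ Finset.univ.erase r, ∑ j,
        ((∑ k, A i k * H k j) - (∑ k, A' i k * H' k j)) ^ 2) ≤ 4 * D ∧
    Real.sqrt (∑ i ∈ Finset.univ.erase r, ∑ j,
        ((∑ k, A i k * H k j) - (∑ k, A' i k * H' k j)) ^ 2) ≤ 2 * Real.sqrt D := by

  have hAnn : ∀ i j, 0 ≤ A i j := fun i j => by rcases hA01 i j with h|h <;> simp [h]
  have hA'nn : ∀ i j, 0 ≤ A' i j := fun i j => by rcases hA'01 i j with h|h <;> simp [h]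
  have key : ∀ i ∈ Finset.univ.erase r,
      (∑ j, ((∑ k, A i k * H k j) - (∑ k, A' i k * H' k j)) ^ 2)
        ≤ 2 * A i r + 2 * A' i r := by
    intro i hi
    have hir : i ≠ r := (Finset.mem_erase.mp hi).1
    have hrow : ∀ j, (∑ k, A i k * H k j) - (∑ k, A' i k * H' k j)
        = A i r * H r j - A' i r * H' r j := by
      intro j
      rw [← Finset.sum_erase_add Finset.univ (fun k => A i k * H k j) (Finset.mem_univ r),
          ← Finset.sum_erase_add Finset.univ (fun k => A' i k * H' k j) (Finset.mem_univ r)]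
      have : ∑ k ∈ Finset.univ.erase r, A i k * H k j
          = ∑ k ∈ Finset.univ.erase r, A' i k * H' k j := by
        refine Finset.sum_congr rfl (fun k hk => ?_)
        have hkr : k ≠ r := (Finset.mem_erase.mp hk).1
        rw [hdiff i k hir hkr, hHr k hkr]
      rw [this]; ring
    calc (∑ j, ((∑ k, A i k * H k j) - (∑ k, A' i k * H' k j)) ^ 2)
        = ∑ j, (A i r * H r j - A' i r * H' r j) ^ 2 := by
          exact Finset.sum_congr rfl fun j _ => by rw [hrow j]
      _ ≤ ∑ j, (2 * (A i r)^2 * (H r j)^2 + 2 * (A' i r)^2 * (H' r j)^2) := by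
          refine Finset.sum_le_sum fun j _ => ?_
          nlinarith [sq_nonneg (A i r * H r j + A' i r * H' r j)]
      _ = 2 * (A i r)^2 * (∑ j, (H r j)^2) + 2 * (A' i r)^2 * (∑ j, (H' r j)^2) := by
          rw [Finset.sum_add_distrib, ← Finset.mul_sum, ← Finset.mul_sum]
      _ ≤ 2 * (A i r)^2 * 1 + 2 * (A' i r)^2 * 1 := by
          have h1 := hH r; have h2 := hH' r
          nlinarith [sq_nonneg (A i r), sq_nonneg (A' i r)]
      _ ≤ 2 * A i r + 2 * A' i r := by
          rcases hA01 i r with h1|h1 <;> rcases hA'01 i r with h2|h2 <;>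
            simp [h1, h2] <;> norm_num
  have hsum : (∑ i ∈ Finset.univ.erase r, ∑ j,
      ((∑ k, A i k * H k j) - (∑ k, A' i k * H' k j)) ^ 2) ≤ 4 * D := by
    calc (∑ i ∈ Finset.univ.erase r, ∑ j,
        ((∑ k, A i k * H k j) - (∑ k, A' i k * H' k j)) ^ 2)
        ≤ ∑ i ∈ Finset.univ.erase r, (2 * A i r + 2 * A' i r) :=
          Finset.sum_le_sum key
      _ = 2 * (∑ i ∈ Finset.univ.erase r, A i r) + 2 * (∑ i ∈ Finset.univ.erase r, A' i r) := by
          rw [Finset.sum_add_distrib, ← Finset.mul_sum, ← Finset.mul_sum]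
      _ ≤ 2 * (∑ i, A i r) + 2 * (∑ i, A' i r) := by
          have h1 : (∑ i ∈ Finset.univ.erase r, A i r) ≤ ∑ i, A i r :=
            Finset.sum_le_sum_of_subset_of_nonneg (Finset.subset_univ _) (fun i _ _ => hAnn i r)
          have h2 : (∑ i ∈ Finset.univ.erase r, A' i r) ≤ ∑ i, A' i r :=
            Finset.sum_le_sum_of_subset_of_nonneg (Finset.subset_univ _) (fun i _ _ => hA'nn i r)
          linarith
      _ ≤ 2 * D + 2 * D := by gcongr <;> [exact hAdeg r; exact hA'deg r]
      _ = 4 * D := by ring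
  refine ⟨hsum, ?_⟩
  have h2 : Real.sqrt (∑ i ∈ Finset.univ.erase r, ∑ j,
      ((∑ k, A i k * H k j) - (∑ k, A' i k * H' k j)) ^ 2) ≤ Real.sqrt (4 * D) :=
    Real.sqrt_le_sqrt hsum
  calc _ ≤ Real.sqrt (4 * D) := h2
    _ = 2 * Real.sqrt D := by
        rw [show (4 : ℝ) * D = 2^2 * D by ring, Real.sqrt_mul (by positivity),
          Real.sqrt_sq (by norm_num)]
end

section
/- Let n, h, D be natural numbers with h ≥ 1, let r ∈ [n], let A, A' ∈ {0,1}^{n×n} be adjacency matrices with zero diagonal such that every column of A and every column of A' sums to at most D, and such that A and A' differ only in row and column r. Let W ∈ ℝ^{n×h} be a matrix each of whose rows has ℓ2 norm at most 1. Then ∑_{i∈[n], i≠r} ‖(AW)_i − (A'W)_i‖² ≤ 2D; equivalently, ‖[AW]_{∖r} − [A'W]_{∖r}‖_F ≤ √(2D). -/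
open Finset

/-- **Sensitivity bound underlying Theorem 5.2 (DPDGC, node-level adjacency).**
Let `A, A' ∈ {0,1}^{n×n}` be adjacency matrices (zero diagonal) with all column sums at most
`D`, differing only in row and column `r`, and let `W ∈ ℝ^{n×h}` have all rows of ℓ2 norm at
most `1`.  Then `∑_{i ≠ r} ‖(AW)_i − (A'W)_i‖² ≤ 2D`, equivalently
`‖[AW]_{∖r} − [A'W]_{∖r}‖_F ≤ √(2D)`. -/
theorem dpdgc_node_sensitivity
    (n h D : ℕ) (hh : 1 ≤ h) (r : Fin n)
    (A A' : Fin n → Fin n → ℝ)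
    (hA01 : ∀ i j, A i j = 0 ∨ A i j = 1)
    (hA'01 : ∀ i j, A' i j = 0 ∨ A' i j = 1)
    (hAdiag : ∀ i, A i i = 0)
    (hA'diag : ∀ i, A' i i = 0)
    (hAdeg : ∀ j, (∑ i, A i j) ≤ (D : ℝ))
    (hA'deg : ∀ j, (∑ i, A' i j) ≤ (D : ℝ))
    (hdiff : ∀ i j, i ≠ r → j ≠ r → A i j = A' i j)
    (W : Fin n → Fin h → ℝ)
    (hW : ∀ i, (∑ j, (W i j) ^ 2) ≤ 1) :
    (∑ i ∈ Finset.univ.erase r, ∑ j,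
        ((∑ k, A i k * W k j) - (∑ k, A' i k * W k j)) ^ 2) ≤ 2 * D ∧
    Real.sqrt (∑ i ∈ Finset.univ.erase r, ∑ j,
        ((∑ k, A i k * W k j) - (∑ k, A' i k * W k j)) ^ 2) ≤ Real.sqrt (2 * D) := by
  have key : ∀ i ∈ Finset.univ.erase r, ∀ j : Fin h,
      (∑ k, A i k * W k j) - (∑ k, A' i k * W k j) = (A i r - A' i r) * W r j := by
    intro i hi j
    have hir : i ≠ r := Finset.ne_of_mem_erase hi
    rw [← Finset.sum_sub_distrib]
    have : ∀ k : Fin n, A i k * W k j - A' i k * W k j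
        = (if k = r then (A i r - A' i r) * W r j else 0) := by
      intro k
      by_cases hk : k = r
      · subst hk; simp [sub_mul]
      · simp [hk, hdiff i k hir hk]
    simp only [this, Finset.sum_ite_eq', Finset.mem_univ, if_true]
  have main : (∑ i ∈ Finset.univ.erase r, ∑ j,
      ((∑ k, A i k * W k j) - (∑ k, A' i k * W k j)) ^ 2) ≤ 2 * D := by
    have step1 : (∑ i ∈ Finset.univ.erase r, ∑ j,
        ((∑ k, A i k * W k j) - (∑ k, A' i k * W k j)) ^ 2)
        = ∑ i ∈ Finset.univ.erase r, (A i r - A' i r) ^ 2 * ∑ j, (W r j) ^ 2 := by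
      refine Finset.sum_congr rfl fun i hi => ?_
      rw [Finset.mul_sum]
      refine Finset.sum_congr rfl fun j _ => ?_
      rw [key i hi j, mul_pow]
    rw [step1]
    have step2 : ∑ i ∈ Finset.univ.erase r, (A i r - A' i r) ^ 2 * ∑ j, (W r j) ^ 2
        ≤ ∑ i ∈ Finset.univ.erase r, (A i r + A' i r) := by
      refine Finset.sum_le_sum fun i _ => ?_
      have h1 : (A i r - A' i r) ^ 2 ≤ A i r + A' i r := by
        rcases hA01 i r with h2 | h2 <;> rcases hA'01 i r with h3 | h3 <;>
          rw [h2, h3] <;> norm_num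
      have h2 : (A i r - A' i r) ^ 2 * ∑ j, (W r j) ^ 2 ≤ (A i r - A' i r) ^ 2 * 1 := by
        apply mul_le_mul_of_nonneg_left (hW r) (sq_nonneg _)
      calc (A i r - A' i r) ^ 2 * ∑ j, (W r j) ^ 2 ≤ (A i r - A' i r) ^ 2 * 1 := h2
        _ = (A i r - A' i r) ^ 2 := mul_one _
        _ ≤ A i r + A' i r := h1
    refine step2.trans ?_
    rw [Finset.sum_add_distrib]
    have hA : ∑ i ∈ Finset.univ.erase r, A i r ≤ (D : ℝ) := by
      refine le_trans ?_ (hAdeg r)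
      apply Finset.sum_le_sum_of_subset_of_nonneg (Finset.erase_subset _ _)
      intro i _ _
      rcases hA01 i r with h2 | h2 <;> rw [h2] <;> norm_num
    have hA' : ∑ i ∈ Finset.univ.erase r, A' i r ≤ (D : ℝ) := by
      refine le_trans ?_ (hA'deg r)
      apply Finset.sum_le_sum_of_subset_of_nonneg (Finset.erase_subset _ _)
      intro i _ _
      rcases hA'01 i r with h2 | h2 <;> rw [h2] <;> norm_num
    linarith
  exact ⟨main, Real.sqrt_le_sqrt main⟩
end

section
/- Let n, h, k be natural numbers with h ≥ 1, let r ∈ [n], let A, A' ∈ {0,1}^{n×n} be adjacency matrices with zero diagonal that differ only in row and column r and additionally satisfy |{i ∈ [n] : i ≠ r and A_{ir} ≠ A'_{ir}}| ≤ k (at most k entries of column r differ). Let W ∈ ℝ^{n×h} be a matrix each of whose rows has ℓ2 norm at most 1. Then ∑_{i∈[n], i≠r} ‖(AW)_i − (A'W)_i‖² ≤ k; equivalently, ‖[AW]_{∖r} − [A'W]_{∖r}‖_F ≤ √k. No bound on the degrees of A or A' is required. -/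
open Finset

/-- **Sensitivity bound underlying Theorem 5.3 (DPDGC, k-neighbor-level adjacency).**
Let `A, A' ∈ {0,1}^{n×n}` be adjacency matrices (zero diagonal) that differ only in row and
column `r`, with at most `k` differing entries in column `r`, and let `W ∈ ℝ^{n×h}` have all
rows of ℓ2 norm at most `1`.  Then `∑_{i ≠ r} ‖(AW)_i − (A'W)_i‖² ≤ k`, equivalently
`‖[AW]_{∖r} − [A'W]_{∖r}‖_F ≤ √k`.  No degree bound on `A` or `A'` is required. -/
theorem dpdgc_kneighbor_sensitivity
    (n h k : ℕ) (hh : 1 ≤ h) (r : Fin n)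
    (A A' : Fin n → Fin n → ℝ)
    (hA01 : ∀ i j, A i j = 0 ∨ A i j = 1)
    (hA'01 : ∀ i j, A' i j = 0 ∨ A' i j = 1)
    (hAdiag : ∀ i, A i i = 0)
    (hA'diag : ∀ i, A' i i = 0)
    (hdiff : ∀ i j, i ≠ r → j ≠ r → A i j = A' i j)
    (hk : (Finset.univ.filter (fun i : Fin n => i ≠ r ∧ A i r ≠ A' i r)).card ≤ k)
    (W : Fin n → Fin h → ℝ)
    (hW : ∀ i, (∑ j, (W i j) ^ 2) ≤ 1) :
    (∑ i ∈ Finset.univ.erase r, ∑ j,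
        ((∑ k', A i k' * W k' j) - (∑ k', A' i k' * W k' j)) ^ 2) ≤ k ∧
    Real.sqrt (∑ i ∈ Finset.univ.erase r, ∑ j,
        ((∑ k', A i k' * W k' j) - (∑ k', A' i k' * W k' j)) ^ 2) ≤ Real.sqrt k := by
  have key : (∑ i ∈ Finset.univ.erase r, ∑ j,
      ((∑ k', A i k' * W k' j) - (∑ k', A' i k' * W k' j)) ^ 2) ≤ k := by
    have hrow : ∀ i ∈ Finset.univ.erase r, ∀ j : Fin h,
        (∑ k', A i k' * W k' j) - (∑ k', A' i k' * W k' j)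
          = (A i r - A' i r) * W r j := by
      intro i hi j
      rw [Finset.mem_erase] at hi
      rw [← Finset.sum_sub_distrib]
      have : ∀ k' : Fin n, A i k' * W k' j - A' i k' * W k' j
          = (A i k' - A' i k') * W k' j := by intro k'; ring
      simp_rw [this]
      rw [Finset.sum_eq_single r]
      · intro b _ hb
        rw [hdiff i b hi.1 hb]; ring
      · simp
    calc (∑ i ∈ Finset.univ.erase r, ∑ j,
        ((∑ k', A i k' * W k' j) - (∑ k', A' i k' * W k' j)) ^ 2)
        ≤ ∑ i ∈ Finset.univ.erase r,
            (if A i r ≠ A' i r then (1:ℝ) else 0) := by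
          apply Finset.sum_le_sum
          intro i hi
          have heq : (∑ j, ((∑ k', A i k' * W k' j) - (∑ k', A' i k' * W k' j)) ^ 2)
              = (A i r - A' i r) ^ 2 * ∑ j, (W r j) ^ 2 := by
            rw [Finset.mul_sum]
            apply Finset.sum_congr rfl
            intro j _
            rw [hrow i hi j]; ring
          rw [heq]
          by_cases hne : A i r = A' i r
          · simp [hne]
          · simp only [hne, if_pos, ne_eq, not_false_iff]
            have h1 : (A i r - A' i r) ^ 2 ≤ 1 := by
              rcases hA01 i r with h2 | h2 <;> rcases hA'01 i r with h3 | h3 <;>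
                rw [h2, h3] <;> norm_num
            have h2 : (0:ℝ) ≤ ∑ j, (W r j) ^ 2 :=
              Finset.sum_nonneg fun j _ => sq_nonneg _
            calc (A i r - A' i r) ^ 2 * ∑ j, (W r j) ^ 2
                ≤ 1 * 1 := mul_le_mul h1 (hW r) h2 zero_le_one
              _ = 1 := by ring
      _ = ((Finset.univ.erase r).filter (fun i => A i r ≠ A' i r)).card := by
          rw [Finset.sum_ite, Finset.sum_const, Finset.sum_const]; simp
      _ ≤ (k : ℝ) := by
          have : ((Finset.univ.erase r).filter (fun i => A i r ≠ A' i r))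
              = (Finset.univ.filter (fun i : Fin n => i ≠ r ∧ A i r ≠ A' i r)) := by
            ext i
            simp [Finset.mem_erase, Finset.mem_filter, and_comm, and_assoc]
          rw [this]
          exact_mod_cast hk
  exact ⟨key, Real.sqrt_le_sqrt key⟩
end

section
/- For all natural numbers n, h, D with h ≥ 1 and 1 ≤ D ≤ n − 1, and every r ∈ [n], there exist an adjacency matrix A ∈ {0,1}^{n×n} with zero diagonal whose every column sums to at most D, and matrices H, H' ∈ ℝ^{n×h} with every row of ℓ2 norm exactly 1 and H_i = H'_i for every i ≠ r, such that ∑_{i∈[n], i≠r} ‖(AH)_i − (AH')_i‖² = 4D. In particular, the worst-case sensitivity 2√D of the graph convolution is attained even when the adjacency matrix is left completely unchanged (i.e., with A' = A, corresponding to k = 0 in k-neighbor-level adjacency), so the required Gaussian noise scale for the standard graph convolution does not decrease as the graph-topology privacy parameter k decreases. -/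
open Finset

/-- **Tightness of the sensitivity bound in Theorem 5.1 (GAP).**
For all `n, h, D` with `h ≥ 1` and `1 ≤ D ≤ n − 1` and every `r ∈ [n]`, there exist an
adjacency matrix `A ∈ {0,1}^{n×n}` (zero diagonal, all column sums at most `D`) and matrices
`H, H' ∈ ℝ^{n×h}` with all rows of ℓ2 norm exactly `1` and `H_i = H'_i` for `i ≠ r`, such that
`∑_{i ≠ r} ‖(AH)_i − (AH')_i‖² = 4D`.  Thus the worst-case sensitivity `2√D` of the standard
graph convolution is attained even with the adjacency matrix unchanged (`A' = A`, i.e. `k = 0`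
in `k`-neighbor-level adjacency). -/
theorem gap_sensitivity_tight
    (n h D : ℕ) (hh : 1 ≤ h) (hD1 : 1 ≤ D) (hDn : D ≤ n - 1) (r : Fin n) :
    ∃ (A : Fin n → Fin n → ℝ) (H H' : Fin n → Fin h → ℝ),
      (∀ i j, A i j = 0 ∨ A i j = 1) ∧
      (∀ i, A i i = 0) ∧
      (∀ j, (∑ i, A i j) ≤ (D : ℝ)) ∧
      (∀ i, (∑ j, (H i j) ^ 2) = 1) ∧
      (∀ i, (∑ j, (H' i j) ^ 2) = 1) ∧
      (∀ i, i ≠ r → H i = H' i) ∧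
      (∑ i ∈ Finset.univ.erase r, ∑ j,
          ((∑ k, A i k * H k j) - (∑ k, A i k * H' k j)) ^ 2) = 4 * D := by
  -- choose a set S of D nodes different from r
  have hcard : D ≤ (Finset.univ.erase r).card := by
    rw [Finset.card_erase_of_mem (Finset.mem_univ r), Finset.card_univ, Fintype.card_fin]
    exact hDn
  obtain ⟨S, hSsub, hScard⟩ := Finset.exists_subset_card_eq hcard
  set e0 : Fin h := ⟨0, hh⟩ with he0
  refine ⟨fun i j => if j = r ∧ i ∈ S then 1 else 0,
    fun i j => if j = e0 then 1 else 0,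
    fun i j => if i = r then (if j = e0 then -1 else 0) else (if j = e0 then 1 else 0),
    ?_, ?_, ?_, ?_, ?_, ?_, ?_⟩
  · intro i j; by_cases hc : j = r ∧ i ∈ S <;> simp [hc]
  · intro i
    by_cases hi : i = r
    · have : i ∉ S := fun hr => (Finset.mem_erase.mp (hSsub hr)).1 (hi ▸ rfl)
      simp [this]
    · simp [hi]
  · intro j
    by_cases hj : j = r
    · have : (∑ i, if j = r ∧ i ∈ S then (1 : ℝ) else 0) = S.card := by
        simp [hj, Finset.sum_ite_mem]
      rw [this, hScard]
    · simp [hj]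
  · intro i
    rw [Finset.sum_eq_single e0] <;> simp_all
  · intro i
    by_cases hi : i = r <;>
    · rw [Finset.sum_eq_single e0] <;> simp_all
  · intro i hi
    funext j
    simp [hi]
  · have key : ∀ i ∈ Finset.univ.erase r, (∑ j,
        ((∑ k, (if (k : Fin n) = r ∧ i ∈ S then (1:ℝ) else 0) * (if j = e0 then 1 else 0))
        - (∑ k, (if (k : Fin n) = r ∧ i ∈ S then (1:ℝ) else 0) *
            (if k = r then (if j = e0 then -1 else 0) else (if j = e0 then 1 else 0)))) ^ 2)
        = if i ∈ S then 4 else 0 := by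
      intro i hi
      have h1 : ∀ j : Fin h, (∑ k, (if (k : Fin n) = r ∧ i ∈ S then (1:ℝ) else 0) *
          (if j = e0 then 1 else 0)) = (if i ∈ S then 1 else 0) * (if j = e0 then 1 else 0) := by
        intro j
        rw [Finset.sum_eq_single r] <;> simp_all
      have h2 : ∀ j : Fin h, (∑ k, (if (k : Fin n) = r ∧ i ∈ S then (1:ℝ) else 0) *
          (if k = r then (if j = e0 then -1 else 0) else (if j = e0 then 1 else 0)))
          = (if i ∈ S then 1 else 0) * (if j = e0 then -1 else 0) := by
        intro j
        rw [Finset.sum_eq_single r] <;> simp_all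
      simp only [h1, h2]
      rw [Finset.sum_eq_single e0]
      · by_cases hiS : i ∈ S <;> norm_num [hiS]
      · intro b _ hb; simp [hb]
      · simp
    rw [Finset.sum_congr rfl key]
    have : (∑ i ∈ Finset.univ.erase r, if i ∈ S then (4:ℝ) else 0)
        = ∑ i ∈ S, (4:ℝ) := by
      rw [Finset.sum_ite_mem, Finset.inter_eq_right.mpr hSsub]
    rw [this, Finset.sum_const, hScard]
    push_cast
    ring
end

section
/- For all natural numbers n, h, D with h ≥ 1, 1 ≤ D, and 2D ≤ n − 1, and every r ∈ [n], there exist adjacency matrices A, A' ∈ {0,1}^{n×n} with zero diagonal, every column of each summing to at most D, that differ only in row and column r, and a matrix W ∈ ℝ^{n×h} with every row of ℓ2 norm exactly 1, such that ∑_{i∈[n], i≠r} ‖(AW)_i − (A'W)_i‖² = 2D. In particular, the sensitivity bound √(2D) for the decoupled graph convolution under node-level adjacency is tight. -/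
open Finset

/-- **Tightness of the sensitivity bound in Theorem 5.2 (DPDGC, node-level adjacency).**
For all `n, h, D` with `h ≥ 1`, `1 ≤ D` and `2D ≤ n − 1` and every `r ∈ [n]`, there exist
adjacency matrices `A, A' ∈ {0,1}^{n×n}` (zero diagonal, all column sums at most `D`) that
differ only in row and column `r`, and a matrix `W ∈ ℝ^{n×h}` with all rows of ℓ2 norm exactly
`1`, such that `∑_{i ≠ r} ‖(AW)_i − (A'W)_i‖² = 2D`. -/
theorem dpdgc_node_sensitivity_tight
    (n h D : ℕ) (hh : 1 ≤ h) (hD1 : 1 ≤ D) (hDn : 2 * D ≤ n - 1) (r : Fin n) :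
    ∃ (A A' : Fin n → Fin n → ℝ) (W : Fin n → Fin h → ℝ),
      (∀ i j, A i j = 0 ∨ A i j = 1) ∧
      (∀ i j, A' i j = 0 ∨ A' i j = 1) ∧
      (∀ i, A i i = 0) ∧
      (∀ i, A' i i = 0) ∧
      (∀ j, (∑ i, A i j) ≤ (D : ℝ)) ∧
      (∀ j, (∑ i, A' i j) ≤ (D : ℝ)) ∧
      (∀ i j, i ≠ r → j ≠ r → A i j = A' i j) ∧
      (∀ i, (∑ j, (W i j) ^ 2) = 1) ∧
      (∑ i ∈ Finset.univ.erase r, ∑ j,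
          ((∑ k, A i k * W k j) - (∑ k, A' i k * W k j)) ^ 2) = 2 * D := by
  classical
  have hn : 2 * D + 1 ≤ n := by omega
  set idx : Fin n → ℕ := fun i => if (i : ℕ) < (r : ℕ) then (i : ℕ) else (i : ℕ) - 1 with hidx
  have hidx_lt : ∀ i : Fin n, i ≠ r → idx i < n - 1 := by
    intro i hi
    have h1 : (i : ℕ) < n := i.isLt
    have h2 : (r : ℕ) < n := r.isLt
    have h3 : (i : ℕ) ≠ (r : ℕ) := fun hc => hi (Fin.ext hc)
    simp only [hidx]
    split <;> omega
  have hidx_inj : ∀ i : Fin n, i ≠ r → ∀ j : Fin n, j ≠ r → idx i = idx j → i = j := by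
    intro i hi j hj hij
    have h3 : (i : ℕ) ≠ (r : ℕ) := fun hc => hi (Fin.ext hc)
    have h4 : (j : ℕ) ≠ (r : ℕ) := fun hc => hj (Fin.ext hc)
    have h1 : (i : ℕ) < n := i.isLt
    have h2 : (j : ℕ) < n := j.isLt
    apply Fin.ext
    simp only [hidx] at hij
    split at hij <;> split at hij <;> omega
  refine ⟨fun i j => if j = r ∧ i ≠ r ∧ idx i < D then 1 else 0,
          fun i j => if j = r ∧ i ≠ r ∧ D ≤ idx i ∧ idx i < 2 * D then 1 else 0,
          fun i j => if j = ⟨0, hh⟩ then 1 else 0,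
          ?_, ?_, ?_, ?_, ?_, ?_, ?_, ?_, ?_⟩
  · intro i j; dsimp only; split <;> simp
  · intro i j; dsimp only; split <;> simp
  · intro i; dsimp only; rw [if_neg]; rintro ⟨h1, h2, -⟩; exact h2 h1
  · intro i; dsimp only; rw [if_neg]; rintro ⟨h1, h2, -⟩; exact h2 h1
  · intro j
    dsimp only
    by_cases hj : j = r
    · have hcard : (Finset.univ.filter (fun i : Fin n => i ≠ r ∧ idx i < D)).card ≤ D := by
        have hmaps : ∀ a ∈ Finset.univ.filter (fun i : Fin n => i ≠ r ∧ idx i < D),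
            idx a ∈ Finset.range D := by
          intro a ha
          simp only [Finset.mem_filter, Finset.mem_univ, true_and] at ha
          simpa using ha.2
        have := Finset.card_le_card_of_injOn (fun i => idx i) hmaps ?_
        · simpa using this
        · intro a ha b hb hab
          simp only [Finset.coe_filter, Set.mem_setOf_eq, Finset.mem_univ, true_and] at ha hb
          exact hidx_inj a ha.1 b hb.1 hab
      have e1 : (∑ i : Fin n, if j = r ∧ i ≠ r ∧ idx i < D then (1:ℝ) else 0)
          = ∑ i : Fin n, if i ≠ r ∧ idx i < D then (1:ℝ) else 0 := by
        refine Finset.sum_congr rfl fun i _ => ?_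
        simp [hj]
      rw [e1, Finset.sum_boole]
      exact_mod_cast hcard
    · simp [hj]
  · intro j
    dsimp only
    by_cases hj : j = r
    · have hcard : (Finset.univ.filter
          (fun i : Fin n => i ≠ r ∧ D ≤ idx i ∧ idx i < 2 * D)).card ≤ D := by
        have hmaps : ∀ a ∈ Finset.univ.filter (fun i : Fin n => i ≠ r ∧ D ≤ idx i ∧ idx i < 2 * D),
            idx a ∈ Finset.Ico D (2 * D) := by
          intro a ha
          simp only [Finset.mem_filter, Finset.mem_univ, true_and] at ha
          simp [Finset.mem_Ico, ha.2.1, ha.2.2]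
        have := Finset.card_le_card_of_injOn (fun i => idx i) hmaps ?_
        · rw [Nat.card_Ico] at this; omega
        · intro a ha b hb hab
          simp only [Finset.coe_filter, Set.mem_setOf_eq, Finset.mem_univ, true_and] at ha hb
          exact hidx_inj a ha.1 b hb.1 hab
      have e1 : (∑ i : Fin n, if j = r ∧ i ≠ r ∧ D ≤ idx i ∧ idx i < 2 * D then (1:ℝ) else 0)
          = ∑ i : Fin n, if i ≠ r ∧ D ≤ idx i ∧ idx i < 2 * D then (1:ℝ) else 0 := by
        refine Finset.sum_congr rfl fun i _ => ?_
        simp [hj]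
      rw [e1, Finset.sum_boole]
      exact_mod_cast hcard
    · simp [hj]
  · intro i j hi hj; simp [hj]
  · intro i
    have h0 : ∀ j : Fin h, ((if j = (⟨0, hh⟩ : Fin h) then (1:ℝ) else 0)) ^ 2
        = if j = (⟨0, hh⟩ : Fin h) then 1 else 0 := by
      intro j; split <;> norm_num
    simp only [h0]
    simp
  · dsimp only
    have keyA : ∀ i : Fin n, ∀ j : Fin h,
        (∑ k : Fin n, (if k = r ∧ i ≠ r ∧ idx i < D then (1:ℝ) else 0)
            * (if j = (⟨0, hh⟩ : Fin h) then 1 else 0))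
        = if j = (⟨0, hh⟩ : Fin h) then (if i ≠ r ∧ idx i < D then (1:ℝ) else 0) else 0 := by
      intro i j
      rw [Finset.sum_eq_single r (fun k _ hk => by simp [hk]) (by simp)]
      by_cases hj : j = (⟨0, hh⟩ : Fin h) <;> by_cases hp : i ≠ r ∧ idx i < D <;>
        simp [hj, hp]
    have keyA' : ∀ i : Fin n, ∀ j : Fin h,
        (∑ k : Fin n, (if k = r ∧ i ≠ r ∧ D ≤ idx i ∧ idx i < 2 * D then (1:ℝ) else 0)
            * (if j = (⟨0, hh⟩ : Fin h) then 1 else 0))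
        = if j = (⟨0, hh⟩ : Fin h) then
            (if i ≠ r ∧ D ≤ idx i ∧ idx i < 2 * D then (1:ℝ) else 0) else 0 := by
      intro i j
      rw [Finset.sum_eq_single r (fun k _ hk => by simp [hk]) (by simp)]
      by_cases hj : j = (⟨0, hh⟩ : Fin h) <;> by_cases hp : i ≠ r ∧ D ≤ idx i ∧ idx i < 2 * D <;>
        simp [hj, hp]
    have step : ∀ i ∈ Finset.univ.erase r,
        (∑ j : Fin h, ((∑ k : Fin n, (if k = r ∧ i ≠ r ∧ idx i < D then (1:ℝ) else 0)
              * (if j = (⟨0, hh⟩ : Fin h) then 1 else 0))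
          - (∑ k : Fin n, (if k = r ∧ i ≠ r ∧ D ≤ idx i ∧ idx i < 2 * D then (1:ℝ) else 0)
              * (if j = (⟨0, hh⟩ : Fin h) then 1 else 0))) ^ 2)
        = if idx i < 2 * D then (1:ℝ) else 0 := by
      intro i hi
      have hir : i ≠ r := Finset.ne_of_mem_erase hi
      have e1 : ∀ j : Fin h,
          ((∑ k : Fin n, (if k = r ∧ i ≠ r ∧ idx i < D then (1:ℝ) else 0)
              * (if j = (⟨0, hh⟩ : Fin h) then 1 else 0))
          - (∑ k : Fin n, (if k = r ∧ i ≠ r ∧ D ≤ idx i ∧ idx i < 2 * D then (1:ℝ) else 0)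
              * (if j = (⟨0, hh⟩ : Fin h) then 1 else 0))) ^ 2
          = if j = (⟨0, hh⟩ : Fin h) then
              ((if i ≠ r ∧ idx i < D then (1:ℝ) else 0)
                - (if i ≠ r ∧ D ≤ idx i ∧ idx i < 2 * D then (1:ℝ) else 0)) ^ 2 else 0 := by
        intro j
        rw [keyA i j, keyA' i j]
        split <;> norm_num
      rw [Finset.sum_congr rfl fun j _ => e1 j, Finset.sum_ite_eq']
      simp only [Finset.mem_univ, if_true]
      rcases lt_or_ge (idx i) D with h1 | h1
      · rw [if_pos ⟨hir, h1⟩, if_neg (by rintro ⟨-, h2, -⟩; omega), if_pos (by omega)]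
        norm_num
      · rcases lt_or_ge (idx i) (2 * D) with h2 | h2
        · rw [if_neg (by rintro ⟨-, h3⟩; omega), if_pos ⟨hir, h1, h2⟩, if_pos h2]
          norm_num
        · rw [if_neg (by rintro ⟨-, h3⟩; omega), if_neg (by rintro ⟨-, -, h3⟩; omega),
            if_neg (by omega)]
          norm_num
    rw [Finset.sum_congr rfl step, Finset.sum_boole]
    have hb0 : 0 < n := by omega
    set back : ℕ → Fin n := fun k =>
      ⟨(if k < (r : ℕ) then k else k + 1) % n, Nat.mod_lt _ hb0⟩ with hback
    have hback_val : ∀ k : ℕ, k < n - 1 →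
        ((back k : ℕ)) = if k < (r : ℕ) then k else k + 1 := by
      intro k hk
      simp only [hback]
      exact Nat.mod_eq_of_lt (by split <;> omega)
    have hidx_back : ∀ k : ℕ, k < n - 1 → idx (back k) = k := by
      intro k hk
      have hrn : (r : ℕ) < n := r.isLt
      have hm : (if k < (r : ℕ) then k else k + 1) % n = if k < (r : ℕ) then k else k + 1 :=
        Nat.mod_eq_of_lt (by split <;> omega)
      simp only [hback, hidx, hm]
      split_ifs <;> omega
    have hback_ne : ∀ k : ℕ, k < n - 1 → back k ≠ r := by
      intro k hk hc
      have h2 : ((back k : ℕ)) = (r : ℕ) := congrArg Fin.val hc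
      have hrn : (r : ℕ) < n := r.isLt
      have hm : (if k < (r : ℕ) then k else k + 1) % n = if k < (r : ℕ) then k else k + 1 :=
        Nat.mod_eq_of_lt (by split <;> omega)
      simp only [hback, hm] at h2
      split at h2 <;> omega
    have hback_idx : ∀ a : Fin n, a ≠ r → back (idx a) = a := by
      intro a har
      have hlt := hidx_lt a har
      have hanr : (a : ℕ) ≠ (r : ℕ) := fun hc => har (Fin.ext hc)
      have han : (a : ℕ) < n := a.isLt
      have hrn : (r : ℕ) < n := r.isLt
      apply Fin.ext
      have hm : (if idx a < (r : ℕ) then idx a else idx a + 1) % n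
          = if idx a < (r : ℕ) then idx a else idx a + 1 :=
        Nat.mod_eq_of_lt (by split <;> omega)
      simp only [hback, hm, hidx]
      have hm1 : (a : ℕ) % n = (a : ℕ) := Nat.mod_eq_of_lt han
      have hm2 : ((a : ℕ) - 1 + 1) % n = (a : ℕ) - 1 + 1 := Nat.mod_eq_of_lt (by omega)
      split_ifs <;> omega
    have hcard : (((Finset.univ.erase r).filter (fun i : Fin n => idx i < 2 * D)).card)
        = (Finset.range (2 * D)).card := by
      refine Finset.card_nbij' (fun a => idx a) back ?_ ?_ ?_ ?_
      · intro a ha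
        simp only [Finset.mem_coe, Finset.mem_filter] at ha
        simpa using ha.2
      · intro b hb
        simp only [Finset.mem_coe, Finset.mem_range] at hb
        have hbn : b < n - 1 := by omega
        rw [Finset.mem_coe, Finset.mem_filter, Finset.mem_erase]
        exact ⟨⟨hback_ne b hbn, Finset.mem_univ _⟩, by rw [hidx_back b hbn]; exact hb⟩
      · intro a ha
        rw [Finset.mem_coe, Finset.mem_filter, Finset.mem_erase] at ha
        exact hback_idx a ha.1.1
      · intro b hb
        rw [Finset.mem_coe, Finset.mem_range] at hb
        exact hidx_back b (by omega)
    rw [hcard, Finset.card_range]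
    push_cast
    ring
end

section
/- For all natural numbers n, h, k with h ≥ 1 and 1 ≤ k ≤ n − 1, and every r ∈ [n], there exist adjacency matrices A, A' ∈ {0,1}^{n×n} with zero diagonal that differ only in row and column r with exactly k differing entries in column r (i.e., |{i ∈ [n] : i ≠ r and A_{ir} ≠ A'_{ir}}| = k), and a matrix W ∈ ℝ^{n×h} with every row of ℓ2 norm exactly 1, such that ∑_{i∈[n], i≠r} ‖(AW)_i − (A'W)_i‖² = k. In particular, the sensitivity bound √k for the decoupled graph convolution under k-neighbor-level adjacency is tight. -/
open Finset

/-- **Tightness of the sensitivity bound in Theorem 5.3 (DPDGC, k-neighbor-level adjacency).**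
For all `n, h, k` with `h ≥ 1` and `1 ≤ k ≤ n − 1` and every `r ∈ [n]`, there exist adjacency
matrices `A, A' ∈ {0,1}^{n×n}` (zero diagonal) that differ only in row and column `r` with
exactly `k` differing entries in column `r`, and a matrix `W ∈ ℝ^{n×h}` with all rows of ℓ2
norm exactly `1`, such that `∑_{i ≠ r} ‖(AW)_i − (A'W)_i‖² = k`. -/
theorem dpdgc_kneighbor_sensitivity_tight
    (n h k : ℕ) (hh : 1 ≤ h) (hk1 : 1 ≤ k) (hkn : k ≤ n - 1) (r : Fin n) :
    ∃ (A A' : Fin n → Fin n → ℝ) (W : Fin n → Fin h → ℝ),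
      (∀ i j, A i j = 0 ∨ A i j = 1) ∧
      (∀ i j, A' i j = 0 ∨ A' i j = 1) ∧
      (∀ i, A i i = 0) ∧
      (∀ i, A' i i = 0) ∧
      (∀ i j, i ≠ r → j ≠ r → A i j = A' i j) ∧
      (Finset.univ.filter (fun i : Fin n => i ≠ r ∧ A i r ≠ A' i r)).card = k ∧
      (∀ i, (∑ j, (W i j) ^ 2) = 1) ∧
      (∑ i ∈ Finset.univ.erase r, ∑ j,
          ((∑ k', A i k' * W k' j) - (∑ k', A' i k' * W k' j)) ^ 2) = k := by
  -- choose a set S of k vertices distinct from r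
  have hcard : k ≤ (Finset.univ.erase r).card := by
    rw [Finset.card_erase_of_mem (Finset.mem_univ r), Finset.card_univ, Fintype.card_fin]
    exact hkn
  obtain ⟨S, hSsub, hScard⟩ := Finset.exists_subset_card_eq hcard
  have hSr : ∀ i ∈ S, i ≠ r := fun i hi => Finset.ne_of_mem_erase (hSsub hi)
  set j0 : Fin h := ⟨0, hh⟩
  refine ⟨fun i j => if j = r ∧ i ∈ S then 1 else 0, fun _ _ => 0,
    fun _ j => if j = j0 then 1 else 0, ?_, ?_, ?_, ?_, ?_, ?_, ?_, ?_⟩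
  · intro i j; by_cases hc : j = r ∧ i ∈ S <;> simp [hc]
  · intro i j; left; rfl
  · intro i
    by_cases hi : i ∈ S
    · simp [hSr i hi]
    · simp [hi]
  · intro i; rfl
  · intro i j hi hj; simp [hj]
  · rw [← hScard]
    congr 1
    ext i
    simp only [Finset.mem_filter, Finset.mem_univ, true_and]
    constructor
    · rintro ⟨hir, hne⟩
      by_contra hi
      exact hne (by simp [hi])
    · intro hi
      exact ⟨hSr i hi, by simp [hi]⟩
  · intro i
    have : ∀ j : Fin h, ((if j = j0 then (1:ℝ) else 0)) ^ 2 = if j = j0 then 1 else 0 := by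
      intro j; by_cases hc : j = j0 <;> simp [hc]
    simp [this]
  · have step : ∀ i ∈ Finset.univ.erase r,
        (∑ j : Fin h, ((∑ k' : Fin n, (if k' = r ∧ i ∈ S then (1:ℝ) else 0) * (if j = j0 then 1 else 0))
            - (∑ k' : Fin n, (0:ℝ) * (if j = j0 then 1 else 0))) ^ 2)
          = if i ∈ S then 1 else 0 := by
      intro i _
      by_cases hi : i ∈ S
      · simp only [hi, and_true, if_true]
        have : ∀ j : Fin h, (∑ k' : Fin n, (if k' = r then (1:ℝ) else 0) * (if j = j0 then 1 else 0))
            = if j = j0 then 1 else 0 := by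
          intro j
          rw [← Finset.sum_mul]
          simp
        simp only [this, zero_mul, Finset.sum_const_zero, sub_zero]
        have : ∀ j : Fin h, ((if j = j0 then (1:ℝ) else 0)) ^ 2 = if j = j0 then 1 else 0 := by
          intro j; by_cases hc : j = j0 <;> simp [hc]
        simp [this]
      · simp [hi]
    rw [Finset.sum_congr rfl step]
    rw [Finset.sum_ite_mem]
    have : Finset.univ.erase r ∩ S = S := Finset.inter_eq_right.mpr hSsub
    simp [this, hScard]
end
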